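/- arXiv:1208.0737 — 7 statements merged into one kernel-verified Lean document; each statement's English description precedes it below -/
import Mathlib

section
/- The almost complex structure J on S³×S³ defined by J(U,V) = (1/√3)(2pq⁻¹V − U, −2qp⁻¹U + V) at a point (p,q), where tangent vectors to S³ at p are identified with quaternions, satisfies J² = −Id on each tangent space. -/
noncomputable section

/-- The almost complex structure `J` of the nearly Kähler `S³ × S³` at the point `(p, q)`,
acting on a tangent vector `Z = (U, V)` (pairs of quaternions with `U ⊥ p`, `V ⊥ q`). -/
def NKJ (p q : Quaternion ℝ) (Z : Quaternion ℝ × Quaternion ℝ) :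
    Quaternion ℝ × Quaternion ℝ :=
  ((Real.sqrt 3)⁻¹ • ((2 : ℝ) • (p * q⁻¹ * Z.2) - Z.1),
   (Real.sqrt 3)⁻¹ • (-((2 : ℝ) • (q * p⁻¹ * Z.1)) + Z.2))

/-!
With `u = p q⁻¹`, `J = 3^{-1/2} M` where `M = [[-1, 2u], [-2u⁻¹, 1]]` is a matrix of left
multiplications. The off-diagonal entries of `M²` cancel and the diagonal ones are `1 - 4`,
so `M² = -3` and `J² = -1`.
-/

def twistedJ {R : Type*} [Ring R] [Algebra ℝ R] (u : Rˣ) (Z : R × R) : R × R :=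
  ((√3)⁻¹ • ((2 : ℝ) • (u * Z.2) - Z.1), (√3)⁻¹ • (-((2 : ℝ) • (u⁻¹ * Z.1)) + Z.2))

theorem twistedJ_twistedJ {R : Type*} [Ring R] [Algebra ℝ R] (u : Rˣ) (Z : R × R) :
    twistedJ u (twistedJ u Z) = -Z := by
  have h3 : (√3)⁻¹ ^ 2 = (3 : ℝ)⁻¹ := by rw [inv_pow, Real.sq_sqrt (by norm_num)]
  simp only [twistedJ, Prod.ext_iff, Prod.fst_neg, Prod.snd_neg, mul_smul_comm, smul_sub,
    smul_add, smul_neg, smul_smul, mul_sub, mul_add, mul_neg, Units.mul_inv_cancel_left,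
    Units.inv_mul_cancel_left]
  constructor <;> match_scalars <;> ring_nf <;> simp [h3]

theorem NKJ_eq_twistedJ {p q : Quaternion ℝ} (hp : p ≠ 0) (hq : q ≠ 0) :
    NKJ p q = twistedJ (Units.mk0 (p * q⁻¹) (mul_ne_zero hp (inv_ne_zero hq))) := by
  funext Z
  simp [NKJ, twistedJ, mul_inv_rev]

theorem NKJ_sq_eq_neg_id_general (p q : Quaternion ℝ) (hp : ‖p‖ = 1) (hq : ‖q‖ = 1)
    (U V : Quaternion ℝ) :
    NKJ p q (NKJ p q (U, V)) = (-U, -V) := by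
  have hp0 : p ≠ 0 := norm_ne_zero_iff.mp (by simp [hp])
  have hq0 : q ≠ 0 := norm_ne_zero_iff.mp (by simp [hq])
  rw [NKJ_eq_twistedJ hp0 hq0, twistedJ_twistedJ]
  rfl

/-- `J² = -Id` on each tangent space of `S³ × S³`. -/
theorem NKJ_sq_eq_neg_id (p q : Quaternion ℝ) (hp : ‖p‖ = 1) (hq : ‖q‖ = 1)
    (U V : Quaternion ℝ) (hU : (inner ℝ U p : ℝ) = 0) (hV : (inner ℝ V q : ℝ) = 0) :
    NKJ p q (NKJ p q (U, V)) = (-U, -V) :=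
  NKJ_sq_eq_neg_id_general p q hp hq U V
end
end

section
/- The metric g on S³×S³ defined by g(Z,Z') = ½(⟨Z,Z'⟩ + ⟨JZ,JZ'⟩) satisfies the explicit formula g(Z,Z') = (4/3)(⟨U,U'⟩ + ⟨V,V'⟩) − (2/3)(⟨p⁻¹U, q⁻¹V'⟩ + ⟨p⁻¹U', q⁻¹V⟩), where Z = (U,V), Z' = (U',V') are tangent vectors at (p,q) and ⟨·,·⟩ is the product of the round metrics (restrictions of the Euclidean inner product on ℝ⁴). -/
/-! The identity is pure algebra: expanding `⟪JZ, JZ'⟫` bilinearly, the left multiplications by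
the unit quaternions `p q⁻¹` and `q p⁻¹` are isometries, and the mixed terms are moved across the
inner product by `⟪a x, y⟫ = ⟪x, a⁻¹ y⟫` for unit `a`, which turns every one of them into
`⟪p⁻¹ U, q⁻¹ V'⟫` or `⟪p⁻¹ U', q⁻¹ V⟫`. -/

noncomputable section

open scoped Quaternion RealInnerProductSpace

theorem norm_mul_inv_eq_one {α : Type*} [NormedDivisionRing α] {a b : α} (ha : ‖a‖ = 1)
    (hb : ‖b‖ = 1) : ‖a * b⁻¹‖ = 1 := by
  rw [norm_mul, norm_inv, ha, hb, inv_one, mul_one]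

namespace Quaternion

theorem re_mul_comm (a b : ℍ) : (a * b).re = (b * a).re := by
  simp only [re_mul]
  ring

theorem inner_mul_left_eq_inner_star_mul (a x y : ℍ) : ⟪a * x, y⟫ = ⟪x, star a * y⟫ := by
  rw [inner_def, inner_def, star_mul, star_star, mul_assoc, re_mul_comm, mul_assoc]

theorem inv_eq_star_of_norm_eq_one {a : ℍ} (ha : ‖a‖ = 1) : a⁻¹ = star a := by
  refine inv_eq_of_mul_eq_one_right ?_
  rw [self_mul_star, normSq_eq_norm_mul_self, ha, mul_one, coe_one]

theorem inner_mul_left_eq_inner_inv_mul {a : ℍ} (ha : ‖a‖ = 1) (x y : ℍ) :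
    ⟪a * x, y⟫ = ⟪x, a⁻¹ * y⟫ := by
  rw [inner_mul_left_eq_inner_star_mul, inv_eq_star_of_norm_eq_one ha]

theorem inner_mul_mul_of_norm_eq_one {a : ℍ} (ha : ‖a‖ = 1) (x y : ℍ) :
    ⟪a * x, a * y⟫ = ⟪x, y⟫ := by
  have ha₀ : a ≠ 0 := norm_ne_zero_iff.mp (ha ▸ one_ne_zero)
  rw [inner_mul_left_eq_inner_inv_mul ha, inv_mul_cancel_left₀ ha₀]

end Quaternion

open Quaternion

theorem inner_inv_sqrt_three_smul {E : Type*} [NormedAddCommGroup E] [InnerProductSpace ℝ E]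
    (x y : E) : ⟪(√3)⁻¹ • x, (√3)⁻¹ • y⟫ = ⟪x, y⟫ / 3 := by
  rw [real_inner_smul_left, real_inner_smul_right, ← mul_assoc, ← mul_inv,
    Real.mul_self_sqrt (by norm_num), inv_mul_eq_div]

section NKJ

variable {p q : ℍ} (hp : ‖p‖ = 1) (hq : ‖q‖ = 1)
include hp hq

theorem inner_NKJ_fst (U V U' V' : ℍ) :
    ⟪(NKJ p q (U, V)).1, (NKJ p q (U', V')).1⟫
      = (4 * ⟪V, V'⟫ + ⟪U, U'⟫ - 2 * ⟪p⁻¹ * U', q⁻¹ * V⟫ - 2 * ⟪p⁻¹ * U, q⁻¹ * V'⟫) / 3 := by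
  rw [NKJ, NKJ, inner_inv_sqrt_three_smul]
  simp only [inner_sub_left, inner_sub_right, real_inner_smul_left, real_inner_smul_right,
    inner_mul_mul_of_norm_eq_one (norm_mul_inv_eq_one hp hq)]
  rw [real_inner_comm (p * q⁻¹ * V') U, mul_assoc, mul_assoc, inner_mul_left_eq_inner_inv_mul hp,
    inner_mul_left_eq_inner_inv_mul hp, real_inner_comm (q⁻¹ * V), real_inner_comm (q⁻¹ * V')]
  ring

theorem inner_NKJ_snd (U V U' V' : ℍ) :
    ⟪(NKJ p q (U, V)).2, (NKJ p q (U', V')).2⟫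
      = (4 * ⟪U, U'⟫ + ⟪V, V'⟫ - 2 * ⟪p⁻¹ * U, q⁻¹ * V'⟫ - 2 * ⟪p⁻¹ * U', q⁻¹ * V⟫) / 3 := by
  rw [NKJ, NKJ, inner_inv_sqrt_three_smul]
  simp only [inner_add_left, inner_add_right, inner_neg_left, inner_neg_right,
    real_inner_smul_left, real_inner_smul_right,
    inner_mul_mul_of_norm_eq_one (norm_mul_inv_eq_one hq hp)]
  rw [real_inner_comm (q * p⁻¹ * U') V, mul_assoc, mul_assoc, inner_mul_left_eq_inner_inv_mul hq,
    inner_mul_left_eq_inner_inv_mul hq]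
  ring

end NKJ

theorem NK_metric_formula_general (p q : Quaternion ℝ) (hp : ‖p‖ = 1) (hq : ‖q‖ = 1)
    (U V U' V' : Quaternion ℝ) :
    (1 / 2 : ℝ) * (((inner ℝ U U' : ℝ) + (inner ℝ V V' : ℝ))
        + ((inner ℝ (NKJ p q (U, V)).1 (NKJ p q (U', V')).1 : ℝ)
          + (inner ℝ (NKJ p q (U, V)).2 (NKJ p q (U', V')).2 : ℝ)))
      = (4 / 3 : ℝ) * ((inner ℝ U U' : ℝ) + (inner ℝ V V' : ℝ))
        - (2 / 3 : ℝ) * ((inner ℝ (p⁻¹ * U) (q⁻¹ * V') : ℝ)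
          + (inner ℝ (p⁻¹ * U') (q⁻¹ * V) : ℝ)) := by
  rw [inner_NKJ_fst hp hq, inner_NKJ_snd hp hq]
  ring

/-- the nearly Kähler metric `g(Z,Z') = ½(⟨Z,Z'⟩ + ⟨JZ,JZ'⟩)` is given by the
explicit formula `(4/3)(⟨U,U'⟩+⟨V,V'⟩) − (2/3)(⟨p⁻¹U,q⁻¹V'⟩+⟨p⁻¹U',q⁻¹V⟩)`. -/
theorem NK_metric_formula (p q : Quaternion ℝ) (hp : ‖p‖ = 1) (hq : ‖q‖ = 1)
    (U V U' V' : Quaternion ℝ)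
    (hU : (inner ℝ U p : ℝ) = 0) (hV : (inner ℝ V q : ℝ) = 0)
    (hU' : (inner ℝ U' p : ℝ) = 0) (hV' : (inner ℝ V' q : ℝ) = 0) :
    (1 / 2 : ℝ) * (((inner ℝ U U' : ℝ) + (inner ℝ V V' : ℝ))
        + ((inner ℝ (NKJ p q (U, V)).1 (NKJ p q (U', V')).1 : ℝ)
          + (inner ℝ (NKJ p q (U, V)).2 (NKJ p q (U', V')).2 : ℝ)))
      = (4 / 3 : ℝ) * ((inner ℝ U U' : ℝ) + (inner ℝ V V' : ℝ))
        - (2 / 3 : ℝ) * ((inner ℝ (p⁻¹ * U) (q⁻¹ * V') : ℝ)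
          + (inner ℝ (p⁻¹ * U') (q⁻¹ * V) : ℝ)) :=
  NK_metric_formula_general p q hp hq U V U' V'
end
end

section
/- For unit quaternions a, b, c, the map F: S³×S³ → S³×S³ given by F(p,q) = (apc⁻¹, bqc⁻¹) preserves the almost complex structure J, i.e., J(dF(Z)) = dF(J(Z)) for every tangent vector Z, where dF(U,V) = (aUc⁻¹, bVc⁻¹). -/
noncomputable section

/-- The differential of `F(p,q) = (apc⁻¹, bqc⁻¹)`. -/
def dF (a b c : Quaternion ℝ) (Z : Quaternion ℝ × Quaternion ℝ) :
    Quaternion ℝ × Quaternion ℝ :=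
  (a * Z.1 * c⁻¹, b * Z.2 * c⁻¹)

/-! The sandwich maps `x ↦ a x c⁻¹` and `x ↦ b x c⁻¹` are real-linear, and they carry the term
`p q⁻¹ V` of `J` at `(p, q)` to `(a p c⁻¹)(b q c⁻¹)⁻¹(b V c⁻¹)`, the same term of `J` at the image
point; symmetrically for `q p⁻¹ U`. -/

theorem sandwich_mul_inv_mul_sandwich {G₀ : Type*} [GroupWithZero G₀] {b c : G₀}
    (hb : b ≠ 0) (hc : c ≠ 0) (a x y z : G₀) :
    a * x * c⁻¹ * (b * y * c⁻¹)⁻¹ * (b * z * c⁻¹) = a * (x * y⁻¹ * z) * c⁻¹ := by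
  simp only [mul_inv_rev, inv_inv, mul_assoc, inv_mul_cancel_left₀ hc, inv_mul_cancel_left₀ hb]

theorem mul_smul_sub_mul {A : Type*} [Ring A] [Algebra ℝ A] (a c x y : A) (r s : ℝ) :
    a * (r • (s • x - y)) * c = r • (s • (a * x * c) - a * y * c) := by
  simp only [mul_smul_comm, smul_mul_assoc, mul_sub, sub_mul]

theorem mul_smul_neg_add_mul {A : Type*} [Ring A] [Algebra ℝ A] (a c x y : A) (r s : ℝ) :
    a * (r • (-(s • x) + y)) * c = r • (-(s • (a * x * c)) + a * y * c) := by
  simp only [mul_smul_comm, smul_mul_assoc, mul_add, add_mul, mul_neg, neg_mul]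

theorem NKJ_dF_eq_dF_NKJ {a b c : Quaternion ℝ} (ha : a ≠ 0) (hb : b ≠ 0) (hc : c ≠ 0)
    (p q : Quaternion ℝ) (Z : Quaternion ℝ × Quaternion ℝ) :
    NKJ (a * p * c⁻¹) (b * q * c⁻¹) (dF a b c Z) = dF a b c (NKJ p q Z) := by
  simp only [NKJ, dF, sandwich_mul_inv_mul_sandwich hb hc,
    sandwich_mul_inv_mul_sandwich ha hc, mul_smul_sub_mul, mul_smul_neg_add_mul]

theorem NK_F_preserves_J_general (a b c : Quaternion ℝ) (ha : ‖a‖ = 1) (hb : ‖b‖ = 1) (hc : ‖c‖ = 1)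
    (p q : Quaternion ℝ)
    (Z : Quaternion ℝ × Quaternion ℝ) :
    NKJ (a * p * c⁻¹) (b * q * c⁻¹) (dF a b c Z) = dF a b c (NKJ p q Z) := by
  exact NKJ_dF_eq_dF_NKJ (ne_zero_of_norm_ne_zero (by simp [ha]))
    (ne_zero_of_norm_ne_zero (by simp [hb])) (ne_zero_of_norm_ne_zero (by simp [hc])) p q Z

/-- `F(p,q) = (apc⁻¹, bqc⁻¹)` preserves the almost complex structure:
`J(dF(Z)) = dF(J(Z))`, where `dF(U,V) = (aUc⁻¹, bVc⁻¹)` and on the left `J` is taken at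
the image point `(apc⁻¹, bqc⁻¹)`. -/
theorem NK_F_preserves_J (a b c : Quaternion ℝ) (ha : ‖a‖ = 1) (hb : ‖b‖ = 1) (hc : ‖c‖ = 1)
    (p q : Quaternion ℝ) (hp : ‖p‖ = 1) (hq : ‖q‖ = 1)
    (Z : Quaternion ℝ × Quaternion ℝ)
    (hZ : (inner ℝ Z.1 p : ℝ) = 0 ∧ (inner ℝ Z.2 q : ℝ) = 0) :
    NKJ (a * p * c⁻¹) (b * q * c⁻¹) (dF a b c Z) = dF a b c (NKJ p q Z) :=
  NK_F_preserves_J_general a b c ha hb hc p q Z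
end
end

section
/- The endomorphism P on tangent spaces of S³×S³ defined by P(U,V) = (pq⁻¹V, qp⁻¹U) at the point (p,q) satisfies P² = Id, PJ = −JP, and g(PZ, PZ') = g(Z,Z') for all tangent vectors Z, Z'. -/
noncomputable section

/-- The nearly Kähler metric `g(Z,Z') = ½(⟨Z,Z'⟩ + ⟨JZ,JZ'⟩)` at `(p, q)`. -/
def NKg (p q : Quaternion ℝ) (Z Z' : Quaternion ℝ × Quaternion ℝ) : ℝ :=
  (1 / 2 : ℝ) * (((inner ℝ Z.1 Z'.1 : ℝ) + (inner ℝ Z.2 Z'.2 : ℝ))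
    + ((inner ℝ (NKJ p q Z).1 (NKJ p q Z').1 : ℝ) + (inner ℝ (NKJ p q Z).2 (NKJ p q Z').2 : ℝ)))

/-- The almost product structure `P` at `(p, q)`: `P(U,V) = (pq⁻¹V, qp⁻¹U)`. -/
def NKP (p q : Quaternion ℝ) (Z : Quaternion ℝ × Quaternion ℝ) :
    Quaternion ℝ × Quaternion ℝ :=
  (p * q⁻¹ * Z.2, q * p⁻¹ * Z.1)

/-! `P` swaps the two factors through the mutually inverse left multiplications by `pq⁻¹` and
`qp⁻¹`; `J` is built from the same two multiplications, which is why `P` anticommutes with it, and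
when `‖p‖ = ‖q‖` they are isometries of `ℍ`, so `P` preserves both terms of `g`. -/

open scoped InnerProductSpace

theorem Quaternion.inner_mul_left_mul_left (a x y : Quaternion ℝ) :
    ⟪a * x, a * y⟫_ℝ = ‖a‖ ^ 2 * ⟪x, y⟫_ℝ := by
  rw [real_inner_eq_norm_add_mul_self_sub_norm_mul_self_sub_norm_mul_self_div_two,
    real_inner_eq_norm_add_mul_self_sub_norm_mul_self_sub_norm_mul_self_div_two x y,
    ← mul_add, norm_mul, norm_mul, norm_mul]
  ring

theorem Quaternion.norm_mul_inv_eq_one {p q : Quaternion ℝ} (hq : q ≠ 0) (hpq : ‖p‖ = ‖q‖) :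
    ‖p * q⁻¹‖ = 1 := by
  rw [norm_mul, norm_inv, hpq, mul_inv_cancel₀ (norm_ne_zero_iff.mpr hq)]

theorem mul_inv_mul_mul_inv_cancel₀ {G₀ : Type*} [GroupWithZero G₀] {a b : G₀} (ha : a ≠ 0)
    (hb : b ≠ 0) : a * b⁻¹ * (b * a⁻¹) = 1 := by
  rw [mul_assoc, inv_mul_cancel_left₀ hb, mul_inv_cancel₀ ha]

section NKP

variable {p q : Quaternion ℝ}

theorem NKP_NKP (hp : p ≠ 0) (hq : q ≠ 0) (Z : Quaternion ℝ × Quaternion ℝ) :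
    NKP p q (NKP p q Z) = Z := by
  simp only [NKP, ← mul_assoc, mul_inv_mul_mul_inv_cancel₀ hp hq, mul_inv_mul_mul_inv_cancel₀ hq hp,
    one_mul]

theorem NKP_NKJ (hp : p ≠ 0) (hq : q ≠ 0) (Z : Quaternion ℝ × Quaternion ℝ) :
    NKP p q (NKJ p q Z) = -NKJ p q (NKP p q Z) := by
  simp only [NKP, NKJ, Prod.neg_mk, Prod.mk.injEq, mul_smul_comm, mul_add, mul_sub, mul_neg,
    ← mul_assoc, mul_inv_mul_mul_inv_cancel₀ hp hq, mul_inv_mul_mul_inv_cancel₀ hq hp, one_mul]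
  constructor <;> module

theorem inner_NKP_add_inner_NKP (hq : q ≠ 0) (hpq : ‖p‖ = ‖q‖)
    (Z Z' : Quaternion ℝ × Quaternion ℝ) :
    ⟪(NKP p q Z).1, (NKP p q Z').1⟫_ℝ + ⟪(NKP p q Z).2, (NKP p q Z').2⟫_ℝ =
      ⟪Z.1, Z'.1⟫_ℝ + ⟪Z.2, Z'.2⟫_ℝ := by
  have hp : p ≠ 0 := norm_ne_zero_iff.mp (hpq ▸ norm_ne_zero_iff.mpr hq)
  simp only [NKP, Quaternion.inner_mul_left_mul_left, Quaternion.norm_mul_inv_eq_one hq hpq,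
    Quaternion.norm_mul_inv_eq_one hp hpq.symm]
  ring

theorem NKg_NKP (hq : q ≠ 0) (hpq : ‖p‖ = ‖q‖) (Z Z' : Quaternion ℝ × Quaternion ℝ) :
    NKg p q (NKP p q Z) (NKP p q Z') = NKg p q Z Z' := by
  have hp : p ≠ 0 := norm_ne_zero_iff.mp (hpq ▸ norm_ne_zero_iff.mpr hq)
  have hJP (W : Quaternion ℝ × Quaternion ℝ) : NKJ p q (NKP p q W) = -NKP p q (NKJ p q W) := by
    rw [NKP_NKJ hp hq, neg_neg]
  simp only [NKg, hJP, Prod.fst_neg, Prod.snd_neg, inner_neg_neg, inner_NKP_add_inner_NKP hq hpq]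

end NKP

theorem NKP_properties_general (p q : Quaternion ℝ) (hp : ‖p‖ = 1) (hq : ‖q‖ = 1)
    (Z Z' : Quaternion ℝ × Quaternion ℝ) :
    NKP p q (NKP p q Z) = Z ∧
    NKP p q (NKJ p q Z) = -(NKJ p q (NKP p q Z)) ∧
    NKg p q (NKP p q Z) (NKP p q Z') = NKg p q Z Z' := by
  have hp0 : p ≠ 0 := norm_ne_zero_iff.mp (by simp [hp])
  have hq0 : q ≠ 0 := norm_ne_zero_iff.mp (by simp [hq])
  exact ⟨NKP_NKP hp0 hq0 Z, NKP_NKJ hp0 hq0 Z, NKg_NKP hq0 (hp.trans hq.symm) Z Z'⟩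

/-- `P² = Id`, `PJ = -JP` and `P` is compatible with `g`. -/
theorem NKP_properties (p q : Quaternion ℝ) (hp : ‖p‖ = 1) (hq : ‖q‖ = 1)
    (Z Z' : Quaternion ℝ × Quaternion ℝ)
    (hZ : (inner ℝ Z.1 p : ℝ) = 0 ∧ (inner ℝ Z.2 q : ℝ) = 0)
    (hZ' : (inner ℝ Z'.1 p : ℝ) = 0 ∧ (inner ℝ Z'.2 q : ℝ) = 0) :
    NKP p q (NKP p q Z) = Z ∧
    NKP p q (NKJ p q Z) = -(NKJ p q (NKP p q Z)) ∧
    NKg p q (NKP p q Z) (NKP p q Z') = NKg p q Z Z' :=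
  NKP_properties_general p q hp hq Z Z'
end
end

section
/- Suppose on the tangent bundle of a manifold one has endomorphism fields J, P and tensors G = ∇̃J, H = ∇̃P satisfying P² = Id, J² = −Id, PJ = −JP, PG(X,Y) + G(PX,PY) = 0, and G(X,PY) + PG(X,Y) = −2JH(X,Y). Then H(X,PY) + PH(X,Y) = 0 for all X, Y. -/
/-! Substituting `P Y` for `Y` in the identity `G(X,PY) + PG(X,Y) = -2JH(X,Y)`, and applying `P`
to it instead, expresses `G(X,Y) + PG(X,PY)` once as `-2JH(X,PY)` and once as `2JPH(X,Y)`
(using `P² = 1` and `PJ = -JP`). Hence `2J(H(X,PY) + PH(X,Y)) = 0`, and `J` is injective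
since `J² = -1`. -/

theorem LinearMap.injective_of_apply_apply_eq_neg {R M : Type*} [Ring R] [AddCommGroup M]
    [Module R M] (J : M →ₗ[R] M) (hJ2 : ∀ x, J (J x) = -x) : Function.Injective J := by
  refine (injective_iff_map_eq_zero J).mpr fun x hx => ?_
  simpa [hx] using (hJ2 x).symm

theorem two_smul_map_add_map_eq_zero {R V : Type*} [Ring R] [AddCommGroup V] [Module R V]
    (J P : V →ₗ[R] V) (G H : V → V → V)
    (hP2 : ∀ X, P (P X) = X) (hPJ : ∀ X, P (J X) = -(J (P X)))
    (h11 : ∀ X Y, G X (P Y) + P (G X Y) = -((2 : R) • J (H X Y))) (X Y : V) :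
    (2 : R) • J (H X (P Y) + P (H X Y)) = 0 := by
  have h11_PY : G X Y + P (G X (P Y)) = -((2 : R) • J (H X (P Y))) := by
    simpa only [hP2] using h11 X (P Y)
  have P_h11 : P (G X (P Y)) + G X Y = (2 : R) • J (P (H X Y)) := by
    simpa only [map_add, map_neg, map_smul, hP2, hPJ, smul_neg, neg_neg] using congrArg P (h11 X Y)
  rw [map_add, smul_add, ← P_h11, add_comm (P _) (G X Y), h11_PY, add_neg_cancel]

theorem NK_H_P_anticommute_general {V : Type*} [AddCommGroup V] [Module ℝ V]
    (J P : V →ₗ[ℝ] V) (G H : V → V → V)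
    (hP2 : ∀ X, P (P X) = X)
    (hJ2 : ∀ X, J (J X) = -X)
    (hPJ : ∀ X, P (J X) = -(J (P X)))
    (h11 : ∀ X Y, G X (P Y) + P (G X Y) = -((2 : ℝ) • J (H X Y))) :
    ∀ X Y, H X (P Y) + P (H X Y) = 0 := by
  intro X Y
  have hJ : J (H X (P Y) + P (H X Y)) = 0 :=
    (smul_eq_zero.mp (two_smul_map_add_map_eq_zero J P G H hP2 hPJ h11 X Y)).resolve_left
      two_ne_zero
  exact (J.injective_of_apply_apply_eq_neg hJ2) (hJ.trans (map_zero J).symm)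

/-- if `P² = Id`, `J² = -Id`, `PJ = -JP`,
`PG(X,Y) + G(PX,PY) = 0` and `G(X,PY) + PG(X,Y) = -2JH(X,Y)`,
then `H(X,PY) + PH(X,Y) = 0`. -/
theorem NK_H_P_anticommute {V : Type*} [AddCommGroup V] [Module ℝ V]
    (J P : V →ₗ[ℝ] V) (G H : V → V → V)
    (hP2 : ∀ X, P (P X) = X)
    (hJ2 : ∀ X, J (J X) = -X)
    (hPJ : ∀ X, P (J X) = -(J (P X)))
    (h9 : ∀ X Y, P (G X Y) + G (P X) (P Y) = 0)
    (h11 : ∀ X Y, G X (P Y) + P (G X Y) = -((2 : ℝ) • J (H X Y))) :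
    ∀ X Y, H X (P Y) + P (H X Y) = 0 :=
  NK_H_P_anticommute_general J P G H hP2 hJ2 hPJ h11
end

section
/- Under the hypotheses P² = Id, J² = −Id, PJ = −JP, PG(X,Y) + G(PX,PY) = 0, and G(X,PY) + PG(X,Y) = −2JH(X,Y), one has H(X,Y) + H(PX,Y) = 0 for all X, Y. -/
theorem Function.injective_of_apply_apply_eq_neg {V : Type*} [InvolutiveNeg V] {J : V → V}
    (hJ2 : ∀ X, J (J X) = -X) : Function.Injective J :=
  Function.LeftInverse.injective (g := fun v => -J v) fun X => by simp only [hJ2, neg_neg]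

theorem NK_H_PX_general {V : Type*} [AddCommGroup V] [Module ℝ V]
    (J P : V →ₗ[ℝ] V) (G H : V → V → V)
    (hP2 : ∀ X, P (P X) = X)
    (hJ2 : ∀ X, J (J X) = -X)
    (h9 : ∀ X Y, P (G X Y) + G (P X) (P Y) = 0)
    (h11 : ∀ X Y, G X (P Y) + P (G X Y) = -((2 : ℝ) • J (H X Y))) :
    ∀ X Y, H X Y + H (P X) Y = 0 := by
  intro X Y
  have h9_PX : P (G (P X) Y) + G X (P Y) = 0 := by simpa only [hP2] using h9 (P X) Y
  -- The four `G`-terms of `h11` at `(X, Y)` and `(P X, Y)` cancel in pairs by `h9`.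
  have hJ_sum : J ((2 : ℝ) • (H X Y + H (P X) Y)) = J 0 := by
    rw [map_smul, map_add, smul_add, map_zero]
    linear_combination (norm := module) h11 X Y + h11 (P X) Y - h9 X Y - h9_PX
  have h_two_smul := Function.injective_of_apply_apply_eq_neg hJ2 hJ_sum
  exact (smul_eq_zero.mp h_two_smul).resolve_left two_ne_zero

/-- if `P² = Id`, `J² = -Id`, `PJ = -JP`,
`PG(X,Y) + G(PX,PY) = 0`, `G(X,PY) + PG(X,Y) = -2JH(X,Y)` (and `G(X,JY) = -JG(X,Y)`),
then `H(X,Y) + H(PX,Y) = 0`. -/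
theorem NK_H_PX {V : Type*} [AddCommGroup V] [Module ℝ V]
    (J P : V →ₗ[ℝ] V) (G H : V → V → V)
    (hP2 : ∀ X, P (P X) = X)
    (hJ2 : ∀ X, J (J X) = -X)
    (hPJ : ∀ X, P (J X) = -(J (P X)))
    (hGJ : ∀ X Y, G X (J Y) = -(J (G X Y)))
    (h9 : ∀ X Y, P (G X Y) + G (P X) (P Y) = 0)
    (h11 : ∀ X Y, G X (P Y) + P (G X Y) = -((2 : ℝ) • J (H X Y))) :
    ∀ X Y, H X Y + H (P X) Y = 0 :=
  NK_H_PX_general J P G H hP2 hJ2 h9 h11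
end

section
/- Let α, β: ℝ² → ℝ³ be smooth maps satisfying α_v = β_u and α_u + β_v = −(4/√3) α × β. Then the functions α·β and ½(α·α − β·β) satisfy the Cauchy–Riemann equations: (α·β)_u = ½(α·α − β·β)_v and (α·β)_v = −½(α·α − β·β)_u. -/
noncomputable section

open Matrix

private lemma hasFDerivAt_dot {f g : ℝ × ℝ → Fin 3 → ℝ}
    {f' g' : (ℝ × ℝ) →L[ℝ] (Fin 3 → ℝ)} {z : ℝ × ℝ}
    (hf : HasFDerivAt f f' z) (hg : HasFDerivAt g g' z) :
    HasFDerivAt (fun w => f w ⬝ᵥ g w)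
      (∑ i : Fin 3, (f z i • ((ContinuousLinearMap.proj i).comp g')
        + g z i • ((ContinuousLinearMap.proj i).comp f'))) z := by
  have h : ∀ i : Fin 3, HasFDerivAt (fun w => f w i * g w i)
      (f z i • ((ContinuousLinearMap.proj i).comp g')
        + g z i • ((ContinuousLinearMap.proj i).comp f')) z := fun i =>
    (((ContinuousLinearMap.proj i : (Fin 3 → ℝ) →L[ℝ] ℝ).hasFDerivAt).comp z hf).mul
      (((ContinuousLinearMap.proj i : (Fin 3 → ℝ) →L[ℝ] ℝ).hasFDerivAt).comp z hg)
  simpa [dotProduct] using HasFDerivAt.fun_sum (fun i (_ : i ∈ Finset.univ) => h i)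

private lemma fderiv_dot_apply {f g : ℝ × ℝ → Fin 3 → ℝ}
    (hf : ContDiff ℝ (⊤ : ℕ∞) f) (hg : ContDiff ℝ (⊤ : ℕ∞) g) (z v : ℝ × ℝ) :
    fderiv ℝ (fun w => f w ⬝ᵥ g w) z v
      = fderiv ℝ f z v ⬝ᵥ g z + f z ⬝ᵥ fderiv ℝ g z v := by
  have hf' : HasFDerivAt f (fderiv ℝ f z) z := (hf.differentiable (by simp) z).hasFDerivAt
  have hg' : HasFDerivAt g (fderiv ℝ g z) z := (hg.differentiable (by simp) z).hasFDerivAt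
  rw [(hasFDerivAt_dot hf' hg').fderiv]
  simp [dotProduct, Finset.sum_add_distrib, mul_comm, add_comm]

/-- if smooth `α, β : ℝ² → ℝ³` satisfy `α_v = β_u` and
`α_u + β_v = −(4/√3) α × β`, then `α·β` and `½(α·α − β·β)` satisfy the
Cauchy–Riemann equations. -/
theorem CR_for_H_system (α β : ℝ × ℝ → (Fin 3 → ℝ))
    (hα : ContDiff ℝ (⊤ : ℕ∞) α) (hβ : ContDiff ℝ (⊤ : ℕ∞) β)
    (h1 : ∀ z, fderiv ℝ α z (0, 1) = fderiv ℝ β z (1, 0))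
    (h2 : ∀ z, fderiv ℝ α z (1, 0) + fderiv ℝ β z (0, 1)
        = (-(4 / Real.sqrt 3)) • crossProduct (α z) (β z)) :
    (∀ z, fderiv ℝ (fun w => α w ⬝ᵥ β w) z (1, 0)
        = (1 / 2 : ℝ) * fderiv ℝ (fun w => α w ⬝ᵥ α w - β w ⬝ᵥ β w) z (0, 1)) ∧
    (∀ z, fderiv ℝ (fun w => α w ⬝ᵥ β w) z (0, 1)
        = -((1 / 2 : ℝ) * fderiv ℝ (fun w => α w ⬝ᵥ α w - β w ⬝ᵥ β w) z (1, 0))) := by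
  have key : ∀ z v, fderiv ℝ (fun w => α w ⬝ᵥ α w - β w ⬝ᵥ β w) z v
      = (fderiv ℝ α z v ⬝ᵥ α z + α z ⬝ᵥ fderiv ℝ α z v)
        - (fderiv ℝ β z v ⬝ᵥ β z + β z ⬝ᵥ fderiv ℝ β z v) := by
    intro z v
    have hαd : HasFDerivAt α (fderiv ℝ α z) z := (hα.differentiable (by simp) z).hasFDerivAt
    have hβd : HasFDerivAt β (fderiv ℝ β z) z := (hβ.differentiable (by simp) z).hasFDerivAt
    have Haa := hasFDerivAt_dot hαd hαd
    have Hbb := hasFDerivAt_dot hβd hβd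
    rw [(Haa.fun_sub Hbb).fderiv]
    have ea := fderiv_dot_apply hα hα z v
    have eb := fderiv_dot_apply hβ hβ z v
    rw [Haa.fderiv] at ea
    rw [Hbb.fderiv] at eb
    simp only [ContinuousLinearMap.coe_sub', Pi.sub_apply, ea, eb]
  -- orthogonality facts
  have hB : ∀ z, (fderiv ℝ α z (1, 0)) ⬝ᵥ β z + (fderiv ℝ β z (0, 1)) ⬝ᵥ β z = 0 := by
    intro z
    have := congrArg (fun x => x ⬝ᵥ β z) (h2 z)
    simp only [add_dotProduct, smul_dotProduct, dotProduct, crossProduct, Fin.sum_univ_three,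
      Matrix.vecHead, Matrix.vecTail, LinearMap.mk₂_apply, Matrix.cons_val_zero,
      Matrix.cons_val_one, Function.comp_apply, Fin.succ_zero_eq_one,
      Fin.succ_one_eq_two, Matrix.cons_val_two, Matrix.tail_cons, Pi.add_apply,
      Pi.smul_apply, smul_eq_mul] at this ⊢
    linear_combination this
  have hA : ∀ z, α z ⬝ᵥ (fderiv ℝ α z (1, 0)) + α z ⬝ᵥ (fderiv ℝ β z (0, 1)) = 0 := by
    intro z
    have := congrArg (fun x => α z ⬝ᵥ x) (h2 z)
    simp only [dotProduct_add, dotProduct_smul, dotProduct, crossProduct, Fin.sum_univ_three,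
      Matrix.vecHead, Matrix.vecTail, LinearMap.mk₂_apply, Matrix.cons_val_zero,
      Matrix.cons_val_one, Function.comp_apply, Fin.succ_zero_eq_one, smul_eq_mul,
      Fin.succ_one_eq_two, Matrix.cons_val_two, Matrix.tail_cons, Pi.smul_apply,
      Pi.add_apply] at this ⊢
    linear_combination this
  constructor
  · intro z
    rw [fderiv_dot_apply hα hβ z (1,0), key z (0,1), h1 z]
    have h2' := hB z
    have c1 : fderiv ℝ β z (1,0) ⬝ᵥ α z = α z ⬝ᵥ fderiv ℝ β z (1,0) := dotProduct_comm _ _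
    have c2 : fderiv ℝ β z (0,1) ⬝ᵥ β z = β z ⬝ᵥ fderiv ℝ β z (0,1) := dotProduct_comm _ _
    have c3 : fderiv ℝ α z (1,0) ⬝ᵥ β z = β z ⬝ᵥ fderiv ℝ α z (1,0) := dotProduct_comm _ _
    linarith [h2', c1, c2, c3]
  · intro z
    rw [fderiv_dot_apply hα hβ z (0,1), key z (1,0), h1 z]
    have h2' := hA z
    have c1 : fderiv ℝ β z (1,0) ⬝ᵥ β z = β z ⬝ᵥ fderiv ℝ β z (1,0) := dotProduct_comm _ _
    have c2 : fderiv ℝ α z (1,0) ⬝ᵥ α z = α z ⬝ᵥ fderiv ℝ α z (1,0) := dotProduct_comm _ _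
    have c3 : fderiv ℝ β z (1,0) ⬝ᵥ α z = α z ⬝ᵥ fderiv ℝ β z (1,0) := dotProduct_comm _ _
    linarith [h2', c1, c2, c3]
end
end
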